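/- arXiv:1210.3229 — 2 statements merged into one kernel-verified Lean document; each statement's English description precedes it below -/
import Mathlib

section
/- Let m ≥ 1 be an integer, i ∈ {0, …, m−1}, and let t₀, …, t_{m−1} be reals with t_j > 0 for all j and Σ_{j=0}^{m−1} t_j < Δ; set d_i = Δ − Σ_{j=i+1}^{m−1} t_j > 0. Then the one-sided limits of t_m ↦ I_i(t₀, …, t_{m−1}, t_m) at t_m = d_i exist, and (limit from below) − (limit from above) = λ²·d_i·exp(−λ·d_i) · (∏_{k=i+1}^{m−1} λ²·t_k·exp(−λ·t_k)) · ∫_{Σ_{j=0}^{i−1} t_j}^{Σ_{j=0}^{i} t_j} g(s) · ∏_{k=0}^{i} F(t_k, s − Σ_{j=0}^{k−1} t_j) ds. -/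
open Real Set Filter MeasureTheory

/-- Conditional ISI density `F t s` given time-to-live `s` of the feedback impulse. -/
noncomputable def F (lam τ t s : ℝ) : ℝ :=
  if 0 < t ∧ t < s then lam ^ 2 * t * Real.exp (-lam * t)
  else if s ≤ t ∧ t ≤ s + τ then
    (1 + lam * s) * Real.exp (-lam * s) * (lam ^ 2 * (t - s) * Real.exp (-lam * (t - s)))
  else 0

/-- Regular part of the stationary time-to-live density. -/
noncomputable def g (lam A B s : ℝ) : ℝ := A + B * Real.exp (2 * lam * s)

/-- Weight of the singular (Dirac) part of the stationary time-to-live distribution. -/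
noncomputable def aC (lam Δ : ℝ) : ℝ :=
  4 * Real.exp (2 * lam * Δ) / ((3 + 2 * lam * Δ) * Real.exp (2 * lam * Δ) + 1)

/-- `T t p q = Σ_{j=p}^{q-1} t_j` (empty sums are `0`). -/
def T {n : ℕ} (t : Fin n → ℝ) (p q : ℕ) : ℝ :=
  ∑ j : Fin n, if p ≤ (j : ℕ) ∧ (j : ℕ) < q then t j else 0

/-- `Ilow lam Δ τ A B i t` is the term `I_i`, `0 ≤ i ≤ m-1`, of the joint ISI density. -/
noncomputable def Ilow (lam Δ τ A B : ℝ) {m : ℕ} (i : ℕ) (t : Fin (m + 1) → ℝ) : ℝ :=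
  (∏ k : Fin (m + 1), if i + 1 ≤ (k : ℕ) then F lam τ (t k) (Δ - T t (i + 1) (k : ℕ)) else 1) *
    ∫ s in T t 0 i..T t 0 (i + 1),
      g lam A B s *
        ∏ k : Fin (m + 1), if (k : ℕ) ≤ i then F lam τ (t k) (s - T t 0 (k : ℕ)) else 1

/-- `Itop lam Δ τ A B t` is the term `I_m` of the joint ISI density. -/
noncomputable def Itop (lam Δ τ A B : ℝ) {m : ℕ} (t : Fin (m + 1) → ℝ) : ℝ :=
  (∫ s in T t 0 m..Δ, g lam A B s * ∏ k : Fin (m + 1), F lam τ (t k) (s - T t 0 (k : ℕ)))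
    + aC lam Δ * ∏ k : Fin (m + 1), F lam τ (t k) (Δ - T t 0 (k : ℕ))

/-- `J lam Δ τ A B t = Σ_{i=0}^{m} I_i(t)`, the joint density of `m+1` consecutive ISIs. -/
noncomputable def J (lam Δ τ A B : ℝ) {m : ℕ} (t : Fin (m + 1) → ℝ) : ℝ :=
  (∑ i ∈ Finset.range m, Ilow lam Δ τ A B i t) + Itop lam Δ τ A B t

/-! Only the last factor of `I_i` involves `t_m`: it is `F(t_m, d_i)`, while the integral and the
other factors do not depend on `t_m`. For `s > 0`, `F(t, s)` tends to `λ²·s·e^{-λs}` as `t ↑ s`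
(the branch `t < s`) and to `0` as `t ↓ s` (the branch `s ≤ t` vanishes at `t = s`). Finally,
`Σ t_j < Δ` puts every other factor `F(t_k, Δ − Σ_{j=i+1}^{k−1} t_j)`, `k > i`, in its first branch. -/

open Topology

section

variable {lam Δ τ A B : ℝ}

lemma T_snoc {m : ℕ} (t : Fin m → ℝ) (x : ℝ) (p q : ℕ) :
    T (Fin.snoc t x) p q = T t p q + if p ≤ m ∧ m < q then x else 0 := by
  unfold T
  rw [Fin.sum_univ_castSucc]
  simp [Fin.snoc_castSucc, Fin.snoc_last]

lemma T_snoc_of_le {m : ℕ} (t : Fin m → ℝ) (x : ℝ) (p : ℕ) {q : ℕ} (hq : q ≤ m) :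
    T (Fin.snoc t x) p q = T t p q := by
  rw [T_snoc, if_neg (by omega), add_zero]

lemma T_le_T {n : ℕ} {t : Fin n → ℝ} (ht : ∀ j, 0 ≤ t j) {p p' q q' : ℕ} (hp : p' ≤ p)
    (hq : q ≤ q') : T t p q ≤ T t p' q' :=
  Finset.sum_le_sum fun j _ => by
    split_ifs <;> first | exact le_rfl | exact ht j | omega

lemma T_add_apply {n : ℕ} (t : Fin n → ℝ) {p : ℕ} (k : Fin n) (hpk : p ≤ k) :
    T t p k + t k = T t p (k + 1) := by
  unfold T
  rw [← Fintype.sum_ite_eq' k t, ← Finset.sum_add_distrib]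
  refine Finset.sum_congr rfl fun j _ => ?_
  split_ifs <;> simp_all [Fin.ext_iff] <;> omega

lemma F_of_lt {t s : ℝ} (ht : 0 < t) (hts : t < s) :
    F lam τ t s = lam ^ 2 * t * exp (-lam * t) := by
  rw [F, if_pos ⟨ht, hts⟩]

lemma tendsto_F_nhdsLT {s : ℝ} (hs : 0 < s) :
    Tendsto (fun x => F lam τ x s) (𝓝[<] s) (𝓝 (lam ^ 2 * s * exp (-lam * s))) := by
  have hcont : Continuous fun x => lam ^ 2 * x * exp (-lam * x) := by fun_prop
  refine (hcont.continuousWithinAt.tendsto).congr' ?_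
  filter_upwards [self_mem_nhdsWithin,
    eventually_nhdsWithin_of_eventually_nhds (eventually_gt_nhds hs)] with x hxs hx
  rw [F_of_lt hx hxs]

lemma tendsto_F_nhdsGT (s : ℝ) : Tendsto (fun x => F lam τ x s) (𝓝[>] s) (𝓝 0) := by
  set bound := fun x =>
    |(1 + lam * s) * exp (-lam * s) * (lam ^ 2 * (x - s) * exp (-lam * (x - s)))|
  have hbound : Tendsto bound (𝓝[>] s) (𝓝 0) := by
    have hcont : Continuous bound := by fun_prop
    simpa [bound] using hcont.continuousWithinAt.tendsto (s := Ioi s) (x := s)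
  refine squeeze_zero_norm' ?_ hbound
  filter_upwards [self_mem_nhdsWithin] with x hx
  rw [F, if_neg fun h => (h.2.trans hx).false]
  split_ifs
  · exact le_rfl
  · rw [norm_zero]
    exact abs_nonneg _

lemma Ilow_snoc {m i : ℕ} (hi : i < m) (t : Fin m → ℝ) (x : ℝ) :
    Ilow lam Δ τ A B i (Fin.snoc t x) =
      (∏ k : Fin m, if i + 1 ≤ (k : ℕ) then F lam τ (t k) (Δ - T t (i + 1) k) else 1) *
        (∫ s in T t 0 i..T t 0 (i + 1),
          g lam A B s * ∏ k : Fin m, if (k : ℕ) ≤ i then F lam τ (t k) (s - T t 0 k) else 1) *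
        F lam τ x (Δ - T t (i + 1) m) := by
  have hlast : ¬(Fin.last m : ℕ) ≤ i := by simpa using hi.not_ge
  have hlast' : i + 1 ≤ (Fin.last m : ℕ) := by simpa using hi
  rw [Ilow, Fin.prod_univ_castSucc, if_pos hlast', T_snoc_of_le t x 0 hi.le,
    T_snoc_of_le t x 0 hi, Fin.snoc_last, Fin.val_last, T_snoc_of_le t x _ le_rfl,
    mul_right_comm]
  congr 2
  · refine Finset.prod_congr rfl fun k _ => ?_
    simp only [Fin.val_castSucc, Fin.snoc_castSucc, T_snoc_of_le t x _ k.isLt.le]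
  · refine intervalIntegral.integral_congr fun s _ => ?_
    rw [Fin.prod_univ_castSucc, if_neg hlast, mul_one]
    congr 1
    refine Finset.prod_congr rfl fun k _ => ?_
    simp only [Fin.val_castSucc, Fin.snoc_castSucc, T_snoc_of_le t x _ k.isLt.le]

lemma prod_F_eq_of_T_lt {m i : ℕ} {t : Fin m → ℝ} (hpos : ∀ j, 0 < t j) (hsum : T t 0 m < Δ) :
    (∏ k : Fin m, if i + 1 ≤ (k : ℕ) then F lam τ (t k) (Δ - T t (i + 1) k) else 1) =
      ∏ k : Fin m, if i + 1 ≤ (k : ℕ) then lam ^ 2 * t k * exp (-lam * t k) else 1 :=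
  Finset.prod_congr rfl fun k _ => by
    split_ifs with hk
    · refine F_of_lt (hpos k) ?_
      have hle := T_le_T (fun j => (hpos j).le) (Nat.zero_le (i + 1)) k.isLt
      rw [← T_add_apply t k hk] at hle
      linarith
    · rfl

end

theorem stmt9_general (lam Δ τ A B : ℝ)
    (m : ℕ) (i : ℕ) (hi : i < m) (t : Fin m → ℝ)
    (hpos : ∀ j, 0 < t j) (hsum : T t 0 m < Δ) :
    0 < Δ - T t (i + 1) m ∧
    ∃ L₁ L₂ : ℝ,
      Filter.Tendsto (fun x => Ilow lam Δ τ A B i (Fin.snoc t x))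
        (nhdsWithin (Δ - T t (i + 1) m) (Set.Iio (Δ - T t (i + 1) m))) (nhds L₁) ∧
      Filter.Tendsto (fun x => Ilow lam Δ τ A B i (Fin.snoc t x))
        (nhdsWithin (Δ - T t (i + 1) m) (Set.Ioi (Δ - T t (i + 1) m))) (nhds L₂) ∧
      L₁ - L₂ =
        lam ^ 2 * (Δ - T t (i + 1) m) * Real.exp (-lam * (Δ - T t (i + 1) m)) *
          (∏ k : Fin m, if i + 1 ≤ (k : ℕ) then lam ^ 2 * t k * Real.exp (-lam * t k) else 1) *
          ∫ s in T t 0 i..T t 0 (i + 1),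
            g lam A B s *
              ∏ k : Fin m, if (k : ℕ) ≤ i then F lam τ (t k) (s - T t 0 (k : ℕ)) else 1 := by
  have hd : 0 < Δ - T t (i + 1) m :=
    sub_pos.2 ((T_le_T (fun j => (hpos j).le) (Nat.zero_le _) le_rfl).trans_lt hsum)
  refine ⟨hd, _, _, ((tendsto_F_nhdsLT hd).const_mul _).congr fun x => (Ilow_snoc hi t x).symm,
    ((tendsto_F_nhdsGT _).const_mul _).congr fun x => (Ilow_snoc hi t x).symm, ?_⟩
  rw [prod_F_eq_of_T_lt hpos hsum, mul_zero, sub_zero]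
  ring

/-- jump of `t_m ↦ I_i(t₀,…,t_{m−1},t_m)` across `t_m = d_i = Δ − Σ_{j=i+1}^{m−1} t_j`. -/
theorem stmt9 (lam Δ τ A B : ℝ) (hlam : 0 < lam) (hΔ : 0 < Δ) (hΔτ : Δ < τ)
    (m : ℕ) (hm : 1 ≤ m) (i : ℕ) (hi : i < m) (t : Fin m → ℝ)
    (hpos : ∀ j, 0 < t j) (hsum : T t 0 m < Δ) :
    0 < Δ - T t (i + 1) m ∧
    ∃ L₁ L₂ : ℝ,
      Filter.Tendsto (fun x => Ilow lam Δ τ A B i (Fin.snoc t x))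
        (nhdsWithin (Δ - T t (i + 1) m) (Set.Iio (Δ - T t (i + 1) m))) (nhds L₁) ∧
      Filter.Tendsto (fun x => Ilow lam Δ τ A B i (Fin.snoc t x))
        (nhdsWithin (Δ - T t (i + 1) m) (Set.Ioi (Δ - T t (i + 1) m))) (nhds L₂) ∧
      L₁ - L₂ =
        lam ^ 2 * (Δ - T t (i + 1) m) * Real.exp (-lam * (Δ - T t (i + 1) m)) *
          (∏ k : Fin m, if i + 1 ≤ (k : ℕ) then lam ^ 2 * t k * Real.exp (-lam * t k) else 1) *
          ∫ s in T t 0 i..T t 0 (i + 1),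
            g lam A B s *
              ∏ k : Fin m, if (k : ℕ) ≤ i then F lam τ (t k) (s - T t 0 (k : ℕ)) else 1 :=
  stmt9_general lam Δ τ A B m i hi t hpos hsum
end

section
/- For every integer m ≥ 1, the joint density J_m is continuous at every point of the domain D_m = {(t₀, …, t_m) : t_j > 0 for all j, Σ_{j=0}^{m−1} t_j < Δ, t_m < τ} that lies on none of the m+1 hyperplanes {Σ_{j=i+1}^{m} t_j = Δ}, i = −1, 0, …, m−1. -/
/-!
Every summand of `J` is a product of factors `F (t k) (Δ - Σ t_j)`, possibly times an integral
over `s` of `g s` and factors `F (t k) (s - Σ t_j)`, with limits that are partial sums of `t`.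
For `t > 0`, `F` is continuous off the lines `t = s` and `t = s + τ`. On `D_m` the partial sums
`Σ_{j=p}^{k} t_j` stay below `Δ + τ`, and below `Δ` unless `k = m`, so the avoided
hyperplanes are exactly what keeps the `Δ`-factors away from these lines. Each integrand is
continuous in `t` for all but finitely many `s` and is dominated by a continuous majorant, so
dominated convergence together with continuity of the limits makes the integrals continuous.
-/

open Real Set Filter MeasureTheory

open Topology
open scoped Interval

section ParametricIntegral

variable {X E : Type*} [TopologicalSpace X] [FirstCountableTopology X]
  [NormedAddCommGroup E] [NormedSpace ℝ E]

theorem continuousAt_intervalIntegral_of_bound {f : X → ℝ → E} {x₀ : X} {a b : X → ℝ}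
    {L U C : ℝ} (hf_meas : ∀ x, AEStronglyMeasurable (f x))
    (hf_bound : ∀ᶠ x in 𝓝 x₀, ∀ s ∈ Icc L U, ‖f x s‖ ≤ C)
    (hf_cont : ∀ᵐ s, ContinuousAt (fun x => f x s) x₀)
    (ha : ContinuousAt a x₀) (hb : ContinuousAt b x₀)
    (ha₀ : a x₀ ∈ Ioo L U) (hb₀ : b x₀ ∈ Ioo L U) :
    ContinuousAt (fun x => ∫ s in a x..b x, f x s) x₀ := by
  have h_bound : ∀ᶠ x in 𝓝 x₀, ∀ᵐ s ∂volume.restrict (Ι L U), ‖f x s‖ ≤ C :=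
    hf_bound.mono fun x hx => (ae_restrict_mem measurableSet_uIoc).mono fun s hs =>
      hx s (uIcc_of_le (ha₀.1.trans ha₀.2).le ▸ uIoc_subset_uIcc hs)
  have h_int : ∀ᶠ x in 𝓝 x₀, IntervalIntegrable (f x) volume L U :=
    h_bound.mono fun x hx => intervalIntegrable_const.mono_fun' (hf_meas x).restrict hx
  have h_sub : ∀ u ∈ Ioo L U, ∀ v ∈ Ioo L U, [[u, v]] ⊆ [[L, U]] := fun u hu v hv =>
    uIcc_subset_uIcc (Icc_subset_uIcc (Ioo_subset_Icc_self hu))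
      (Icc_subset_uIcc (Ioo_subset_Icc_self hv))
  have h_prim : ∀ c : X → ℝ, ContinuousAt c x₀ → c x₀ ∈ Ioo L U →
      ContinuousAt (fun x => ∫ s in a x₀..c x, f x s) x₀ := fun c hc hc₀ =>
    (intervalIntegral.continuousAt_parametric_primitive_of_dominated (fun _ => C) L U
      (fun x => (hf_meas x).restrict) h_bound intervalIntegrable_const
      (ae_restrict_of_ae hf_cont) ha₀ hc₀ Real.volume_singleton).comp
      (f := fun x => (x, c x)) (continuousAt_id.prodMk hc)
  have h_eq : (fun x => (∫ s in a x₀..b x, f x s) - ∫ s in a x₀..a x, f x s)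
      =ᶠ[𝓝 x₀] fun x => ∫ s in a x..b x, f x s := by
    filter_upwards [h_int, ha.eventually_mem (Ioo_mem_nhds ha₀.1 ha₀.2),
      hb.eventually_mem (Ioo_mem_nhds hb₀.1 hb₀.2)] with x hx hax hbx
    exact intervalIntegral.integral_interval_sub_left (hx.mono_set (h_sub _ ha₀ _ hbx))
      (hx.mono_set (h_sub _ ha₀ _ hax))
  exact ((h_prim b hb hb₀).sub (h_prim a ha ha₀)).congr h_eq

theorem continuousAt_intervalIntegral_of_norm_le [WeaklyLocallyCompactSpace X]
    {f : X → ℝ → E} {Φ : X × ℝ → ℝ} {x₀ : X} {a b : X → ℝ}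
    (hf_meas : ∀ x, AEStronglyMeasurable (f x)) (hΦ : Continuous Φ)
    (hfΦ : ∀ x s, ‖f x s‖ ≤ Φ (x, s))
    (hf_cont : ∀ᵐ s, ContinuousAt (fun x => f x s) x₀)
    (ha : ContinuousAt a x₀) (hb : ContinuousAt b x₀) :
    ContinuousAt (fun x => ∫ s in a x..b x, f x s) x₀ := by
  set L := min (a x₀) (b x₀) - 1
  set U := max (a x₀) (b x₀) + 1
  obtain ⟨K, hK, hKx₀⟩ := exists_compact_mem_nhds x₀
  obtain ⟨C, hC⟩ := (hK.prod isCompact_Icc).exists_bound_of_continuousOn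
    (hΦ.continuousOn (s := K ×ˢ Icc L U))
  refine continuousAt_intervalIntegral_of_bound (C := C) hf_meas ?_ hf_cont ha hb
    (L := L) (U := U) ?_ ?_
  · filter_upwards [hKx₀] with x hx s hs
    exact (hfΦ x s).trans ((le_abs_self _).trans (hC (x, s) ⟨hx, hs⟩))
  · exact ⟨(min_le_left _ _).trans_lt' (sub_one_lt _), (le_max_left _ _).trans_lt (lt_add_one _)⟩
  · exact ⟨(min_le_right _ _).trans_lt' (sub_one_lt _), (le_max_right _ _).trans_lt (lt_add_one _)⟩

end ParametricIntegral

section SumT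

variable {n : ℕ}

theorem continuous_T (p q : ℕ) : Continuous fun t : Fin n → ℝ => T t p q :=
  continuous_finsetSum _ fun j _ => by split_ifs <;> fun_prop

theorem T_mono {t : Fin n → ℝ} (ht : ∀ j, 0 ≤ t j) {p p' q q' : ℕ} (hp : p' ≤ p) (hq : q ≤ q') :
    T t p q ≤ T t p' q' :=
  Finset.sum_le_sum fun j _ => by
    split_ifs with h h'
    · exact le_rfl
    · exact absurd ⟨hp.trans h.1, h.2.trans_le hq⟩ h'
    · exact ht j
    · exact le_rfl

theorem T_add_one (t : Fin n → ℝ) {p : ℕ} (k : Fin n) (hpk : p ≤ k) :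
    T t p (k + 1) = T t p k + t k := by
  have h : ∀ j : Fin n, (if p ≤ (j : ℕ) ∧ (j : ℕ) < k + 1 then t j else 0)
      = (if p ≤ (j : ℕ) ∧ (j : ℕ) < k then t j else 0) + if k = j then t j else 0 := by
    intro j
    rcases lt_trichotomy (j : ℕ) k with hj | hj | hj
    · simp [hj, Nat.lt_succ_of_lt hj, Fin.ext_iff, hj.ne']
    · simp [Fin.ext hj, hpk]
    · simp [hj.not_gt, (Nat.succ_le_of_lt hj).not_gt, Fin.ext_iff, hj.ne]
  simp only [T, h, Finset.sum_add_distrib, Finset.sum_ite_eq, Finset.mem_univ, if_true]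

end SumT

section FDensity

variable {lam τ : ℝ}

theorem continuousAt_F (hτ : 0 ≤ τ) {t s : ℝ} (ht : 0 < t) (hts : t ≠ s) (htsτ : t ≠ s + τ) :
    ContinuousAt (fun p : ℝ × ℝ => F lam τ p.1 p.2) (t, s) := by
  rcases hts.lt_or_gt with hts | hst
  · have hU : ∀ᶠ p : ℝ × ℝ in 𝓝 (t, s), 0 < p.1 ∧ p.1 < p.2 :=
      ((isOpen_lt continuous_const continuous_fst).inter
        (isOpen_lt continuous_fst continuous_snd)).mem_nhds ⟨ht, hts⟩
    refine ContinuousAt.congr (f := fun p => lam ^ 2 * p.1 * exp (-lam * p.1)) (by fun_prop) ?_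
    filter_upwards [hU] with p hp
    simp [F, hp]
  rcases htsτ.lt_or_gt with htτ | htτ
  · have hU : ∀ᶠ p : ℝ × ℝ in 𝓝 (t, s), p.2 < p.1 ∧ p.1 < p.2 + τ :=
      ((isOpen_lt continuous_snd continuous_fst).inter
        (isOpen_lt continuous_fst (continuous_snd.add continuous_const))).mem_nhds ⟨hst, htτ⟩
    refine ContinuousAt.congr (f := fun p => (1 + lam * p.2) * exp (-lam * p.2) *
      (lam ^ 2 * (p.1 - p.2) * exp (-lam * (p.1 - p.2)))) (by fun_prop) ?_
    filter_upwards [hU] with p hp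
    simp [F, hp.1.not_gt, hp.1.le, hp.2.le]
  · have hU : ∀ᶠ p : ℝ × ℝ in 𝓝 (t, s), p.2 + τ < p.1 :=
      (isOpen_lt (continuous_snd.add continuous_const) continuous_fst).mem_nhds htτ
    refine ContinuousAt.congr (f := fun _ => 0) continuousAt_const ?_
    filter_upwards [hU] with p hp
    have hp' : p.2 < p.1 := by linarith
    simp [F, hp'.not_gt, hp.not_ge]

theorem measurable_F : Measurable fun p : ℝ × ℝ => F lam τ p.1 p.2 := by
  refine .ite ?_ (by fun_prop) (.ite ?_ (by fun_prop) measurable_const)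
  · exact (measurableSet_lt measurable_const measurable_fst).inter
      (measurableSet_lt measurable_fst measurable_snd)
  · exact (measurableSet_le measurable_snd measurable_fst).inter
      (measurableSet_le measurable_fst (measurable_snd.add_const τ))

noncomputable def FMajorant (lam t s : ℝ) : ℝ :=
  |lam ^ 2 * t * exp (-lam * t)| +
    |(1 + lam * s) * exp (-lam * s) * (lam ^ 2 * (t - s) * exp (-lam * (t - s)))|

theorem continuous_FMajorant : Continuous fun p : ℝ × ℝ => FMajorant lam p.1 p.2 := by
  unfold FMajorant; fun_prop

theorem abs_F_le_FMajorant (t s : ℝ) : |F lam τ t s| ≤ FMajorant lam t s := by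
  unfold F FMajorant
  split_ifs
  · exact le_add_of_nonneg_right (abs_nonneg _)
  · exact le_add_of_nonneg_left (abs_nonneg _)
  · simp only [abs_zero]; positivity

end FDensity

section JointDensity

variable {lam Δ τ A B : ℝ}

theorem continuousAt_F_sub_T {n : ℕ} (hτ : 0 ≤ τ) {t : Fin n → ℝ} {c : ℝ} {p : ℕ} {k : Fin n}
    (hk : 0 < t k) (hc : T t p k + t k ≠ c) (hcτ : T t p k + t k ≠ c + τ) :
    ContinuousAt (fun u : Fin n → ℝ => F lam τ (u k) (c - T u p k)) t :=
  (continuousAt_F hτ hk (by contrapose! hc; linarith) (by contrapose! hcτ; linarith)).comp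
    (f := fun u : Fin n → ℝ => (u k, c - T u p k))
    ((continuous_apply k).prodMk (continuous_const.sub (continuous_T p k))).continuousAt

theorem continuousAt_intervalIntegral_g_mul_prod_F {n : ℕ} (hτ : 0 ≤ τ) {t : Fin n → ℝ}
    (hpos : ∀ j, 0 < t j) (S : Finset (Fin n)) {a b : (Fin n → ℝ) → ℝ}
    (ha : Continuous a) (hb : Continuous b) :
    ContinuousAt (fun x => ∫ s in a x..b x,
      g lam A B s * ∏ k ∈ S, F lam τ (x k) (s - T x 0 k)) t := by
  have hg : Continuous (g lam A B) := by unfold g; fun_prop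
  have hmeas_T : ∀ (x : Fin n → ℝ) (k : Fin n),
      Measurable fun s : ℝ => ((x k, s - T x 0 k) : ℝ × ℝ) :=
    fun x k => measurable_const.prodMk (measurable_id.sub_const _)
  have hcont_T : ∀ k : Fin n, Continuous fun q : (Fin n → ℝ) × ℝ => (q.1 k, q.2 - T q.1 0 k) :=
    fun k => ((continuous_apply k).comp continuous_fst).prodMk
      (continuous_snd.sub ((continuous_T 0 k).comp continuous_fst))
  -- the `k`-th factor jumps only at `s = T t 0 (k + 1)` and `s = T t 0 (k + 1) - τ`
  have h_kinks : ∀ᵐ s : ℝ, ∀ k : Fin n, T t 0 k + t k ≠ s ∧ T t 0 k + t k ≠ s + τ := by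
    refine ae_all_iff.2 fun k => ?_
    filter_upwards [Measure.ae_ne volume (T t 0 k + t k),
      Measure.ae_ne volume (T t 0 k + t k - τ)] with s h₁ h₂
    exact ⟨h₁.symm, fun h => h₂ (by linarith)⟩
  refine continuousAt_intervalIntegral_of_norm_le
    (Φ := fun q : (Fin n → ℝ) × ℝ =>
      |g lam A B q.2| * ∏ k ∈ S, FMajorant lam (q.1 k) (q.2 - T q.1 0 k))
    (fun x => ?_) ?_ (fun x s => ?_) ?_ ha.continuousAt hb.continuousAt
  · exact (hg.measurable.mul (Finset.measurable_prod _ fun k _ =>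
      measurable_F.comp (hmeas_T x k))).aestronglyMeasurable
  · exact (hg.comp continuous_snd).abs.mul
      (continuous_finsetProd _ fun k _ => continuous_FMajorant.comp (hcont_T k))
  · rw [Real.norm_eq_abs, abs_mul, Finset.abs_prod]
    gcongr with k
    exact abs_F_le_FMajorant _ _
  · filter_upwards [h_kinks] with s hs
    exact continuousAt_const.mul
      (tendsto_finsetProd _ fun k _ => continuousAt_F_sub_T hτ (hpos k) (hs k).1 (hs k).2)

variable {m : ℕ} {t : Fin (m + 1) → ℝ}

theorem continuousAt_F_Δ_sub_T (hpos : ∀ j, 0 < t j) (hTm : T t 0 m < Δ)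
    (hlast : t (Fin.last m) < τ) (hne : ∀ p : ℕ, p ≤ m → T t p (m + 1) ≠ Δ)
    {p : ℕ} {k : Fin (m + 1)} (hpk : p ≤ k) :
    ContinuousAt (fun u : Fin (m + 1) → ℝ => F lam τ (u k) (Δ - T u p k)) t := by
  have hnn : ∀ j, 0 ≤ t j := fun j => (hpos j).le
  refine continuousAt_F_sub_T ((hpos _).trans hlast).le (hpos k) ?_ ?_ <;>
    rw [← T_add_one t k hpk]
  · rcases (Nat.lt_succ_iff.mp k.isLt).lt_or_eq with hkm | hkm
    · exact ((T_mono hnn p.zero_le hkm).trans_lt hTm).ne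
    · have hk : k = Fin.last m := Fin.ext hkm
      subst hk
      exact hne p hpk
  · have hT : T t 0 (m + 1) = T t 0 m + t (Fin.last m) := T_add_one t (Fin.last m) m.zero_le
    exact ((T_mono hnn p.zero_le k.isLt).trans_lt (hT ▸ add_lt_add hTm hlast)).ne

theorem continuousAt_Ilow (hpos : ∀ j, 0 < t j) (hTm : T t 0 m < Δ)
    (hlast : t (Fin.last m) < τ) (hne : ∀ p : ℕ, p ≤ m → T t p (m + 1) ≠ Δ) (i : ℕ) :
    ContinuousAt (Ilow lam Δ τ A B i) t := by
  unfold Ilow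
  simp_rw [← Finset.prod_filter]
  exact (tendsto_finsetProd _ fun k hk => continuousAt_F_Δ_sub_T
      hpos hTm hlast hne (Finset.mem_filter.1 hk).2).mul
    (continuousAt_intervalIntegral_g_mul_prod_F ((hpos _).trans hlast).le hpos _
      (continuous_T 0 i) (continuous_T 0 (i + 1)))

theorem continuousAt_Itop (hpos : ∀ j, 0 < t j) (hTm : T t 0 m < Δ)
    (hlast : t (Fin.last m) < τ) (hne : ∀ p : ℕ, p ≤ m → T t p (m + 1) ≠ Δ) :
    ContinuousAt (Itop lam Δ τ A B) t :=
  (continuousAt_intervalIntegral_g_mul_prod_F ((hpos _).trans hlast).le hpos _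
      (continuous_T 0 m) continuous_const).add
    (continuousAt_const.mul (tendsto_finsetProd _ fun k _ =>
      continuousAt_F_Δ_sub_T hpos hTm hlast hne k.val.zero_le))

end JointDensity

theorem stmt11_general (lam Δ τ A B : ℝ)
    (m : ℕ) (t : Fin (m + 1) → ℝ)
    (ht : (∀ j, 0 < t j) ∧ T t 0 m < Δ ∧ t (Fin.last m) < τ)
    (hne : ∀ p : ℕ, p ≤ m → T t p (m + 1) ≠ Δ) :
    ContinuousWithinAt (J lam Δ τ A B)
      {u : Fin (m + 1) → ℝ | (∀ j, 0 < u j) ∧ T u 0 m < Δ ∧ u (Fin.last m) < τ} t := by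
  obtain ⟨hpos, hTm, hlast⟩ := ht
  have hJ : ContinuousAt (J lam Δ τ A B) t :=
    (tendsto_finsetSum _ fun i _ => continuousAt_Ilow hpos hTm hlast hne i).add
      (continuousAt_Itop hpos hTm hlast hne)
  exact hJ.continuousWithinAt

/-- for `m ≥ 1`, the joint density `J_m` is continuous at every point of
`D_m` lying on none of the `m+1` hyperplanes `Σ_{j=i+1}^{m} t_j = Δ`, `i = −1,…,m−1`. -/
theorem stmt11 (lam Δ τ A B : ℝ) (hlam : 0 < lam) (hΔ : 0 < Δ) (hΔτ : Δ < τ)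
    (m : ℕ) (hm : 1 ≤ m) (t : Fin (m + 1) → ℝ)
    (ht : (∀ j, 0 < t j) ∧ T t 0 m < Δ ∧ t (Fin.last m) < τ)
    (hne : ∀ p : ℕ, p ≤ m → T t p (m + 1) ≠ Δ) :
    ContinuousWithinAt (J lam Δ τ A B)
      {u : Fin (m + 1) → ℝ | (∀ j, 0 < u j) ∧ T u 0 m < Δ ∧ u (Fin.last m) < τ} t :=
  stmt11_general lam Δ τ A B m t ht hne
end
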